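/- Let L be the Laplacian of a connected weighted graph on N vertices with eigenvalues 0 = λ_1 < λ_2 ≤ … ≤ λ_N, and for i < j let R_{ij} denote the effective resistance between vertices i and j. Then the total effective resistance satisfies R_tot := Σ_{i<j} R_{ij} = N · Σ_{n=2}^{N} 1/λ_n. -/

import Mathlib

/-!
Put `J := (1/N) 𝟙𝟙ᵀ` (`avgProj`) and diagonalise `L = U diag(λ) Uᵀ` with `λ_{k₀} = 0`.
By connectivity the kernel of `L` consists of the constant vectors, so the `k₀`-th column of `U`
is `±N^{-1/2} 𝟙` and `U diag(δ_{k₀}) Uᵀ = J`. Hence `B := U diag(g) Uᵀ`, where `g k₀ = 1` and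
`g k = 1/λ_k` otherwise, satisfies `L B = 1 - J` and `J B = J`. The first identity makes
`B (δᵢ - δⱼ)` a solution of `L v = δᵢ - δⱼ`, so `Rᵢⱼ = Bᵢᵢ + Bⱼⱼ - Bᵢⱼ - Bⱼᵢ`; summing over pairs
gives `N tr B - ∑ᵢⱼ Bᵢⱼ`, the second identity gives `∑ᵢⱼ Bᵢⱼ = N`, and `tr B = 1 + ∑_{k ≠ k₀} 1/λ_k`.
-/

open Matrix Finset

namespace Matrix

section Laplacian

variable {n : Type*} [Fintype n] [DecidableEq n]

def laplacian (W : Matrix n n ℝ) : Matrix n n ℝ := diagonal (fun i => ∑ j, W i j) - W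

theorem laplacian_mulVec (W : Matrix n n ℝ) (v : n → ℝ) (i : n) :
    (W.laplacian *ᵥ v) i = ∑ j, W i j * (v i - v j) := by
  rw [laplacian, sub_mulVec, Pi.sub_apply, mulVec_diagonal]
  simp only [mulVec, dotProduct, mul_sub, sum_sub_distrib, sum_mul]

theorem two_mul_dotProduct_laplacian_mulVec {W : Matrix n n ℝ} (hW : W.IsSymm) (v : n → ℝ) :
    2 * (v ⬝ᵥ W.laplacian *ᵥ v) = ∑ i, ∑ j, W i j * (v i - v j) ^ 2 := by
  have hswap : ∑ i, ∑ j, W i j * (v i * (v i - v j))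
      = ∑ i, ∑ j, W i j * (v j * (v j - v i)) := by
    rw [sum_comm]
    exact sum_congr rfl fun i _ => sum_congr rfl fun j _ => by rw [hW.apply i j]
  calc 2 * (v ⬝ᵥ W.laplacian *ᵥ v)
      = ∑ i, ∑ j, W i j * (v i * (v i - v j)) + ∑ i, ∑ j, W i j * (v i * (v i - v j)) := by
        rw [two_mul]
        simp only [dotProduct, laplacian_mulVec, mul_sum, mul_left_comm]
    _ = ∑ i, ∑ j, W i j * (v i - v j) ^ 2 := by
        nth_rw 2 [hswap]
        simp only [← sum_add_distrib]
        exact sum_congr rfl fun i _ => sum_congr rfl fun j _ => by ring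

theorem apply_eq_of_laplacian_mulVec_eq_zero {W : Matrix n n ℝ} (hW : W.IsSymm)
    (hnn : ∀ i j, 0 ≤ W i j) {G : SimpleGraph n} (hG : ∀ i j, G.Adj i j → 0 < W i j)
    (hconn : G.Connected) {v : n → ℝ} (hv : W.laplacian *ᵥ v = 0) (i j : n) : v i = v j := by
  have hterm_nonneg : ∀ i j, 0 ≤ W i j * (v i - v j) ^ 2 := fun i j =>
    mul_nonneg (hnn i j) (sq_nonneg _)
  have hsum : ∑ i, ∑ j, W i j * (v i - v j) ^ 2 = 0 := by
    rw [← two_mul_dotProduct_laplacian_mulVec hW, hv, dotProduct_zero, mul_zero]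
  rw [Fintype.sum_eq_zero_iff_of_nonneg fun i => sum_nonneg fun j _ => hterm_nonneg i j] at hsum
  have hadj : ∀ i j, G.Adj i j → v i = v j := fun i j hij => by
    have := congrFun ((Fintype.sum_eq_zero_iff_of_nonneg (hterm_nonneg i)).1 (congrFun hsum i)) j
    rw [Pi.zero_apply, mul_eq_zero, pow_eq_zero_iff two_ne_zero, sub_eq_zero] at this
    exact this.resolve_left (hG i j hij).ne'
  obtain ⟨w⟩ := hconn.preconnected i j
  induction w with
  | nil => rfl
  | cons h _ ih => exact (hadj _ _ h).trans ih

end Laplacian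

section AvgProj

variable {n : Type*} [Fintype n]

noncomputable def avgProj (n : Type*) [Fintype n] : Matrix n n ℝ :=
  of fun _ _ => (Fintype.card n : ℝ)⁻¹

theorem avgProj_mulVec_of_sum_eq_zero {x : n → ℝ} (hx : ∑ i, x i = 0) :
    avgProj n *ᵥ x = 0 := by
  ext i
  simp [avgProj, mulVec, dotProduct, ← mul_sum, hx]

theorem sum_sum_eq_card_of_avgProj_mul [Nonempty n] {B : Matrix n n ℝ}
    (hB : avgProj n * B = avgProj n) : ∑ i, ∑ j, B i j = Fintype.card n := by
  obtain ⟨i₀⟩ := ‹Nonempty n›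
  have hrow := congrArg (fun M => ∑ j, M i₀ j) hB
  simp only [avgProj, mul_apply, of_apply, ← mul_sum, sum_const, card_univ, nsmul_eq_mul] at hrow
  have hc : (Fintype.card n : ℝ)⁻¹ ≠ 0 := by simp
  exact sum_comm.trans (mul_left_cancel₀ hc (by rw [hrow, mul_comm]))

theorem mulVec_mulVec_eq_self_of_mul_eq_one_sub_avgProj [DecidableEq n] {L B : Matrix n n ℝ}
    (hLB : L * B = 1 - avgProj n) {x : n → ℝ} (hx : ∑ i, x i = 0) : L *ᵥ (B *ᵥ x) = x := by
  rw [mulVec_mulVec, hLB, sub_mulVec, one_mulVec, avgProj_mulVec_of_sum_eq_zero hx, sub_zero]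

theorem resistance_eq_of_mul_eq_one_sub_avgProj [DecidableEq n] {L B : Matrix n n ℝ}
    (hLB : L * B = 1 - avgProj n) {R : n → n → ℝ}
    (hR : ∀ i j v, L *ᵥ v = Pi.single i 1 - Pi.single j 1 → R i j = v i - v j) (i j : n) :
    R i j = B i i + B j j - B i j - B j i := by
  rw [hR i j _ (mulVec_mulVec_eq_self_of_mul_eq_one_sub_avgProj hLB (by simp))]
  simp only [mulVec_sub, mulVec_single_one, Pi.sub_apply, col_apply]
  ring

end AvgProj

section PairSums

variable {n : Type*} [Fintype n] [LinearOrder n]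

theorem two_nsmul_sum_sum_filter_lt {M : Type*} [AddCommMonoid M] {f : n → n → M}
    (hf : ∀ i j, f i j = f j i) (hdiag : ∀ i, f i i = 0) :
    2 • ∑ i, ∑ j ∈ univ.filter (i < ·), f i j = ∑ i, ∑ j, f i j := by
  have hswap : ∑ i, ∑ j ∈ univ.filter (i < ·), f i j
      = ∑ i, ∑ j ∈ univ.filter (· < i), f i j := by
    rw [sum_comm' (t' := univ) (s' := fun i => univ.filter (· < i)) (by simp)]
    exact sum_congr rfl fun i _ => sum_congr rfl fun j _ => hf j i
  rw [two_nsmul]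
  nth_rw 2 [hswap]
  rw [← sum_add_distrib]
  refine sum_congr rfl fun i _ => ?_
  rw [← sum_filter_add_sum_filter_not univ (i < ·)]
  congr 1
  refine sum_subset (fun j => by simpa using le_of_lt) fun j hj hj' => ?_
  simp only [mem_filter, mem_univ, true_and, not_lt] at hj hj'
  rw [le_antisymm hj hj', hdiag]

theorem sum_filter_lt_eq_card_mul_trace_sub_sum (B : Matrix n n ℝ) :
    ∑ i, ∑ j ∈ univ.filter (i < ·), (B i i + B j j - B i j - B j i)
      = Fintype.card n * trace B - ∑ i, ∑ j, B i j := by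
  have h := two_nsmul_sum_sum_filter_lt (f := fun i j => B i i + B j j - B i j - B j i)
    (fun i j => by ring) (fun i => by ring)
  have hcol : ∑ i, ∑ j, B j i = ∑ i, ∑ j, B i j := sum_comm
  have hfull : ∑ i, ∑ j, (B i i + B j j - B i j - B j i)
      = 2 * (Fintype.card n * trace B - ∑ i, ∑ j, B i j) := by
    simp only [sum_add_distrib, sum_sub_distrib, sum_const, card_univ, nsmul_eq_mul, hcol,
      trace, diag, ← mul_sum]
    ring
  rw [hfull, two_nsmul, ← two_mul] at h
  exact mul_left_cancel₀ two_ne_zero h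

end PairSums

theorem trace_conjStarAlgAut {n R : Type*} [Fintype n] [DecidableEq n] [CommRing R]
    [StarRing R] (U : unitaryGroup n R) (M : Matrix n n R) :
    trace (Unitary.conjStarAlgAut R _ U M) = trace M := by
  rw [Unitary.conjStarAlgAut_apply, trace_mul_cycle, Unitary.coe_star_mul_self, one_mul]

namespace IsHermitian

open Unitary

variable {n : Type*} [Fintype n] [DecidableEq n] {L : Matrix n n ℝ} (hL : L.IsHermitian)

theorem conjStarAlgAut_diagonal_eigenvalues :
    conjStarAlgAut ℝ _ hL.eigenvectorUnitary (diagonal hL.eigenvalues) = L := by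
  conv_rhs => rw [hL.spectral_theorem]
  simp [RCLike.ofReal_real_eq_id]

theorem conjStarAlgAut_diagonal_apply (d : n → ℝ) (i j : n) :
    conjStarAlgAut ℝ _ hL.eigenvectorUnitary (diagonal d) i j
      = ∑ k, d k * (hL.eigenvectorBasis k i * hL.eigenvectorBasis k j) := by
  rw [conjStarAlgAut_apply, mul_apply]
  simp only [mul_diagonal, star_eq_conjTranspose, conjTranspose_apply, star_trivial,
    eigenvectorUnitary_apply]
  exact sum_congr rfl fun k _ => by ring

theorem conjStarAlgAut_diagonal_single_eq_avgProj {k : n}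
    (hk : ∀ i j, hL.eigenvectorBasis k i = hL.eigenvectorBasis k j) :
    conjStarAlgAut ℝ _ hL.eigenvectorUnitary (diagonal (Pi.single k 1)) = avgProj n := by
  have hnorm : ∑ i, hL.eigenvectorBasis k i * hL.eigenvectorBasis k i = 1 := by
    simpa [mul_apply] using
      congrFun (congrFun (Unitary.coe_star_mul_self hL.eigenvectorUnitary) k) k
  simp only [hk _ k, sum_const, card_univ, nsmul_eq_mul] at hnorm
  ext i j
  rw [conjStarAlgAut_diagonal_apply, avgProj, of_apply]
  simp only [Pi.single_apply, ite_mul, one_mul, zero_mul, sum_ite_eq', mem_univ, if_true,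
    hk i k, hk j k]
  exact eq_inv_of_mul_eq_one_right hnorm

theorem exists_mul_eq_one_sub_avgProj (hker : ∀ v, L *ᵥ v = 0 → ∀ i j, v i = v j) {k₀ : n}
    (h₀ : hL.eigenvalues k₀ = 0) (hne : ∀ k ≠ k₀, hL.eigenvalues k ≠ 0) :
    ∃ B : Matrix n n ℝ, L * B = 1 - avgProj n ∧ avgProj n * B = avgProj n ∧
      trace B = 1 + ∑ k ∈ univ.filter (· ≠ k₀), (hL.eigenvalues k)⁻¹ := by
  set Φ := conjStarAlgAut ℝ _ hL.eigenvectorUnitary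
  have hJ : Φ (diagonal (Pi.single k₀ 1)) = avgProj n :=
    hL.conjStarAlgAut_diagonal_single_eq_avgProj fun i j => hker _
      (by rw [hL.mulVec_eigenvectorBasis, h₀, zero_smul]) i j
  set g : n → ℝ := Function.update (fun k => (hL.eigenvalues k)⁻¹) k₀ 1
  refine ⟨Φ (diagonal g), ?_, ?_, ?_⟩
  · rw [← hJ, ← map_one Φ, ← map_sub, ← diagonal_one, diagonal_sub]
    conv_lhs => rw [← hL.conjStarAlgAut_diagonal_eigenvalues]
    rw [← map_mul, diagonal_mul_diagonal]
    congr 2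
    ext k
    by_cases hk : k = k₀
    · simp [hk, h₀, g]
    · simp [hk, g, hne k hk]
  · rw [← hJ, ← map_mul, diagonal_mul_diagonal]
    congr 2
    ext k
    by_cases hk : k = k₀
    · simp [hk, g]
    · simp [hk]
  · rw [trace_conjStarAlgAut, trace_diagonal, sum_update_of_mem (mem_univ _), filter_ne',
      sdiff_singleton_eq_erase]

end IsHermitian

end Matrix

theorem stmt_10_general {N : ℕ} (hN : 0 < N) (W : Matrix (Fin N) (Fin N) ℝ)
    (hsym : W.IsSymm) (hnn : ∀ i j, 0 ≤ W i j)
    (L : Matrix (Fin N) (Fin N) ℝ)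
    (hL : L = Matrix.diagonal (fun i => ∑ j, W i j) - W)
    (G : SimpleGraph (Fin N)) (hG : ∀ i j, G.Adj i j ↔ i ≠ j ∧ 0 < W i j)
    (hconn : G.Connected)
    (hLH : L.IsHermitian)
    (μ : Fin N → ℝ)
    (hperm : ∃ σ : Equiv.Perm (Fin N), ∀ n, μ n = hLH.eigenvalues (σ n))
    (h0 : μ ⟨0, hN⟩ = 0) (hpos : ∀ n, n ≠ ⟨0, hN⟩ → 0 < μ n)
    (R : Fin N → Fin N → ℝ)
    (hR : ∀ i j, ∀ v : Fin N → ℝ,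
      L.mulVec v = (Pi.single i 1 - Pi.single j 1 : Fin N → ℝ) → R i j = v i - v j) :
    ∑ i : Fin N, ∑ j ∈ Finset.univ.filter (fun j => i < j), R i j
      = (N : ℝ) * ∑ n ∈ Finset.univ.filter (fun n => n ≠ (⟨0, hN⟩ : Fin N)), (μ n)⁻¹ := by
  obtain ⟨σ, hσ⟩ := hperm
  set z : Fin N := ⟨0, hN⟩
  have hker : ∀ v, L *ᵥ v = 0 → ∀ i j, v i = v j := fun v hv => by
    subst hL
    exact apply_eq_of_laplacian_mulVec_eq_zero hsym hnn (fun i j h => ((hG i j).1 h).2) hconn hv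
  have hne : ∀ k ≠ σ z, hLH.eigenvalues k ≠ 0 := fun k hk => by
    rw [← σ.apply_symm_apply k, ← hσ]
    exact (hpos _ fun h => hk (by rw [← h, σ.apply_symm_apply])).ne'
  obtain ⟨B, hLB, hJB, htr⟩ := hLH.exists_mul_eq_one_sub_avgProj hker (by rw [← hσ, h0]) hne
  have hsum : ∑ k ∈ univ.filter (· ≠ σ z), (hLH.eigenvalues k)⁻¹
      = ∑ n ∈ univ.filter (· ≠ z), (μ n)⁻¹ :=
    (sum_equiv σ (by simp) (by simp [hσ])).symm
  have : Nonempty (Fin N) := ⟨z⟩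
  calc _ = ∑ i, ∑ j ∈ univ.filter (i < ·), (B i i + B j j - B i j - B j i) := by
        simp only [resistance_eq_of_mul_eq_one_sub_avgProj hLB hR]
    _ = N * (1 + ∑ n ∈ univ.filter (· ≠ z), (μ n)⁻¹) - N := by
        rw [sum_filter_lt_eq_card_mul_trace_sub_sum, sum_sum_eq_card_of_avgProj_mul hJB, htr, hsum,
          Fintype.card_fin]
    _ = _ := by ring

/-- For a connected weighted graph with Laplacian `L` whose eigenvalues
(listed in nondecreasing order as `μ`) satisfy `0 = μ₁ < μ₂ ≤ … ≤ μ_N`, the total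
effective resistance satisfies `R_tot = ∑_{i<j} Rᵢⱼ = N · ∑_{n=2}^N 1/μₙ`, where
`Rᵢⱼ = vᵢ - vⱼ` for any solution `v` of `L v = δᵢ - δⱼ`. -/
theorem stmt_10 {N : ℕ} (hN : 0 < N) (W : Matrix (Fin N) (Fin N) ℝ)
    (hsym : W.IsSymm) (hnn : ∀ i j, 0 ≤ W i j) (hdiag : ∀ i, W i i = 0)
    (L : Matrix (Fin N) (Fin N) ℝ)
    (hL : L = Matrix.diagonal (fun i => ∑ j, W i j) - W)
    (G : SimpleGraph (Fin N)) (hG : ∀ i j, G.Adj i j ↔ i ≠ j ∧ 0 < W i j)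
    (hconn : G.Connected)
    (hLH : L.IsHermitian)
    (μ : Fin N → ℝ) (hmono : Monotone μ)
    (hperm : ∃ σ : Equiv.Perm (Fin N), ∀ n, μ n = hLH.eigenvalues (σ n))
    (h0 : μ ⟨0, hN⟩ = 0) (hpos : ∀ n, n ≠ ⟨0, hN⟩ → 0 < μ n)
    (R : Fin N → Fin N → ℝ)
    (hR : ∀ i j, ∀ v : Fin N → ℝ,
      L.mulVec v = (Pi.single i 1 - Pi.single j 1 : Fin N → ℝ) → R i j = v i - v j) :
    ∑ i : Fin N, ∑ j ∈ Finset.univ.filter (fun j => i < j), R i j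
      = (N : ℝ) * ∑ n ∈ Finset.univ.filter (fun n => n ≠ (⟨0, hN⟩ : Fin N)), (μ n)⁻¹ :=
  stmt_10_general hN W hsym hnn L hL G hG hconn hLH μ hperm h0 hpos R hR
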